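/- arXiv:2511.05472 — 2 statements merged into one kernel-verified Lean document; each statement's English description precedes it below -/
import Mathlib

section
/- Let α, β, α', β' ∈ ℝ/2πℤ and suppose the pairs of diagonal SU(2) matrices (diag(e^{iα}, e^{-iα}), diag(e^{iβ}, e^{-iβ})) and (diag(e^{iα'}, e^{-iα'}), diag(e^{iβ'}, e^{-iβ'})) are simultaneously conjugate in SU(2), i.e. there is U ∈ SU(2) conjugating the first pair to the second. Then (α', β') = (α, β) or (α', β') = (-α, -β) in (ℝ/2πℤ)². -/
/-- `SU(2)`: the subgroup of the unitary group of 2×2 complex matrices with determinant 1. -/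
def SU2 : Subgroup (Matrix.unitaryGroup (Fin 2) ℂ) :=
  MonoidHom.ker (Matrix.detMonoidHom.comp (Matrix.unitaryGroup (Fin 2) ℂ).subtype)

/-- The underlying 2×2 complex matrix of an element of `SU(2)`. -/
def SU2.mat (U : SU2) : Matrix (Fin 2) (Fin 2) ℂ := U.1.1

/-- The diagonal matrix `diag(e^{iα}, e^{-iα})`. -/
noncomputable def diagAngle (α : ℝ) : Matrix (Fin 2) (Fin 2) ℂ :=
  !![Complex.exp (α * Complex.I), 0; 0, Complex.exp (-α * Complex.I)]

/-!
If `M * diag(d) * M⁻¹ = diag(d')`, then `M i j * d j = d' i * M i j`, so each nonzero entry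
`M i j` forces `d' i = d j`. As `det M ≠ 0`, the first row of `M` has a nonzero entry, and the
same entry serves both conjugated pairs: `M 0 0 ≠ 0` gives `(α', β') = (α, β)`, while
`M 0 1 ≠ 0` gives `(α', β') = (-α, -β)`.
-/

open Complex Matrix

theorem Real.Angle.coe_eq_coe_of_exp_mul_I_eq {a b : ℝ}
    (h : Complex.exp (a * I) = Complex.exp (b * I)) : (a : Real.Angle) = b := by
  obtain ⟨m, hm⟩ := Circle.exp_eq_exp.mp (Subtype.ext h : Circle.exp a = Circle.exp b)
  rw [Real.Angle.angle_eq_iff_two_pi_dvd_sub]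
  exact ⟨m, by linarith⟩

theorem Matrix.apply_eq_of_mul_diagonal_eq_diagonal_mul {n R : Type*} [Fintype n] [DecidableEq n]
    [CommRing R] [IsDomain R] {M : Matrix n n R} {d d' : n → R}
    (h : M * diagonal d = diagonal d' * M) {i j : n} (hij : M i j ≠ 0) : d' i = d j := by
  have hentry := congrFun₂ h i j
  rw [mul_diagonal, diagonal_mul, mul_comm] at hentry
  exact mul_right_cancel₀ hij hentry.symm

theorem Matrix.exists_apply_ne_zero_of_det_ne_zero {n R : Type*} [Fintype n] [DecidableEq n]
    [CommRing R] {M : Matrix n n R} (hM : M.det ≠ 0) (i : n) : ∃ j, M i j ≠ 0 := by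
  by_contra! hrow
  exact hM (det_eq_zero_of_row_eq_zero i hrow)

theorem diagAngle_eq_diagonal (α : ℝ) :
    diagAngle α = diagonal ![exp (α * I), exp (-α * I)] := by
  rw [diagonal_fin_two]
  rfl

theorem SU2.det_mat (U : SU2) : (SU2.mat U).det = 1 := U.2

theorem SU2.mul_diagAngle_eq_of_conj_eq (U : SU2) {α α' : ℝ}
    (h : SU2.mat U * diagAngle α * (SU2.mat U)⁻¹ = diagAngle α') :
    SU2.mat U * diagAngle α = diagAngle α' * SU2.mat U := by
  rw [← h, nonsing_inv_mul_cancel_right _ _ (by simp [SU2.det_mat])]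

section

variable {M : Matrix (Fin 2) (Fin 2) ℂ} {α α' : ℝ}

theorem angle_eq_of_mul_diagAngle_eq (h : M * diagAngle α = diagAngle α' * M) (h0 : M 0 0 ≠ 0) :
    (α' : Real.Angle) = α := by
  rw [diagAngle_eq_diagonal, diagAngle_eq_diagonal] at h
  exact Real.Angle.coe_eq_coe_of_exp_mul_I_eq (apply_eq_of_mul_diagonal_eq_diagonal_mul h h0)

theorem angle_eq_neg_of_mul_diagAngle_eq (h : M * diagAngle α = diagAngle α' * M)
    (h1 : M 0 1 ≠ 0) : (α' : Real.Angle) = -α := by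
  rw [diagAngle_eq_diagonal, diagAngle_eq_diagonal] at h
  rw [← Real.Angle.coe_neg]
  refine Real.Angle.coe_eq_coe_of_exp_mul_I_eq ?_
  simpa using apply_eq_of_mul_diagonal_eq_diagonal_mul h h1

end

/-- If the pairs of diagonal matrices `(diag(e^{iα}, e^{-iα}), diag(e^{iβ}, e^{-iβ}))` and
`(diag(e^{iα'}, e^{-iα'}), diag(e^{iβ'}, e^{-iβ'}))` are simultaneously conjugate in `SU(2)`,
then `(α', β') = (α, β)` or `(α', β') = (-α, -β)` in `(ℝ/2πℤ)²`. -/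
theorem pillowcase_conjugate_pairs (α β α' β' : ℝ)
    (U : SU2)
    (hA : SU2.mat U * diagAngle α * (SU2.mat U)⁻¹ = diagAngle α')
    (hB : SU2.mat U * diagAngle β * (SU2.mat U)⁻¹ = diagAngle β') :
    ((α' : Real.Angle) = (α : Real.Angle) ∧ (β' : Real.Angle) = (β : Real.Angle)) ∨
    ((α' : Real.Angle) = -(α : Real.Angle) ∧ (β' : Real.Angle) = -(β : Real.Angle)) := by
  have hA' := SU2.mul_diagAngle_eq_of_conj_eq U hA
  have hB' := SU2.mul_diagAngle_eq_of_conj_eq U hB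
  obtain ⟨j, hj⟩ :=
    exists_apply_ne_zero_of_det_ne_zero (by simp [SU2.det_mat] : (SU2.mat U).det ≠ 0) 0
  fin_cases j
  · exact Or.inl ⟨angle_eq_of_mul_diagAngle_eq hA' hj, angle_eq_of_mul_diagAngle_eq hB' hj⟩
  · exact Or.inr
      ⟨angle_eq_neg_of_mul_diagAngle_eq hA' hj, angle_eq_neg_of_mul_diagAngle_eq hB' hj⟩
end

section
/- Let A, B ∈ SU(2) satisfy A B A⁻¹ B⁻¹ = -I. Then there exists U ∈ SU(2) with U A U⁻¹ = i (i.e., the matrix diag(i, -i)) and U B U⁻¹ = j (i.e., the matrix with rows (0, 1) and (-1, 0)). -/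
open ComplexConjugate Matrix Complex

namespace Matrix

theorem of_fin_two_eq_iff {α : Type*} {a b c d a' b' c' d' : α} :
    !![a, b; c, d] = !![a', b'; c', d'] ↔ a = a' ∧ b = b' ∧ c = c' ∧ d = d' := by
  constructor
  · intro h
    exact ⟨congrFun₂ h 0 0, congrFun₂ h 0 1, congrFun₂ h 1 0, congrFun₂ h 1 1⟩
  · rintro ⟨rfl, rfl, rfl, rfl⟩
    rfl

theorem star_fin_two_of {α : Type*} [Star α] (a b c d : α) :
    star !![a, b; c, d] = !![star a, star c; star b, star d] := by
  ext i j
  fin_cases i <;> fin_cases j <;> rfl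

theorem trace_eq_zero_of_mul_eq_neg_mul {n R : Type*} [Fintype n] [DecidableEq n]
    [CommRing R] [NoZeroDivisors R] [CharZero R] {A B : Matrix n n R} (hB : IsUnit B)
    (h : A * B = -(B * A)) : A.trace = 0 := by
  obtain ⟨B, rfl⟩ := hB
  have hA : A = -(B * A * (↑B⁻¹ : Matrix n n R)) := by
    rw [← neg_mul, ← h, mul_assoc, Units.mul_inv, mul_one]
  rw [← CharZero.eq_neg_self_iff]
  conv_lhs => rw [hA, trace_neg, trace_units_conj]

theorem exists_mulVec_eq_smul_of_fin_two {K : Type*} [Field K]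
    (A : Matrix (Fin 2) (Fin 2) K) {t : K} (ht : t ^ 2 - A.trace * t + A.det = 0) :
    ∃ v ≠ 0, A *ᵥ v = t • v := by
  have hdet : (A - t • 1).det = 0 := by
    rw [trace_fin_two, det_fin_two] at ht
    simp only [det_fin_two, sub_apply, smul_apply, smul_eq_mul, one_apply_eq, one_apply_ne,
      ne_eq, zero_ne_one, one_ne_zero, not_false_eq_true, mul_one, mul_zero, sub_zero]
    linear_combination ht
  obtain ⟨v, hv0, hv⟩ := exists_mulVec_eq_zero_iff.2 hdet
  refine ⟨v, hv0, ?_⟩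
  rwa [sub_mulVec, smul_mulVec, one_mulVec, sub_eq_zero] at hv

end Matrix

namespace Complex

theorem normSq_add_normSq_eq_one_iff {a b : ℂ} :
    normSq a + normSq b = 1 ↔ conj a * a + conj b * b = 1 := by
  rw [← ofReal_inj]
  push_cast [normSq_eq_conj_mul_self]
  rfl

theorem exists_normSq_add_normSq_eq_one_mulVec_eq_smul (A : Matrix (Fin 2) (Fin 2) ℂ) {t : ℂ}
    (ht : t ^ 2 - A.trace * t + A.det = 0) :
    ∃ a b : ℂ, normSq a + normSq b = 1 ∧ A *ᵥ ![a, b] = t • ![a, b] := by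
  obtain ⟨v, hv0, hv⟩ := A.exists_mulVec_eq_smul_of_fin_two ht
  have hpos : 0 < normSq (v 0) + normSq (v 1) := by
    contrapose! hv0
    have h0 := normSq_nonneg (v 0)
    have h1 := normSq_nonneg (v 1)
    exact funext <| Fin.forall_fin_two.2
      ⟨normSq_eq_zero.1 (by linarith), normSq_eq_zero.1 (by linarith)⟩
  set r := √(normSq (v 0) + normSq (v 1))
  refine ⟨v 0 / r, v 1 / r, ?_, ?_⟩
  · rw [normSq_div, normSq_div, normSq_ofReal, ← add_div, Real.mul_self_sqrt hpos.le]
    exact div_self hpos.ne'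
  · have hv' : ![v 0 / r, v 1 / r] = (r : ℂ)⁻¹ • v := by
      ext i
      fin_cases i <;> exact div_eq_inv_mul _ _
    rw [hv', mulVec_smul, hv, smul_comm]

end Complex

namespace SU2

theorem mat_mul (U V : SU2) : mat (U * V) = mat U * mat V := rfl

theorem mat_inv (U : SU2) : mat U⁻¹ = star (mat U) := rfl

theorem ext {U V : SU2} (h : mat U = mat V) : U = V := Subtype.ext (Subtype.ext h)

theorem star_mat_mul_mat (U : SU2) : star (mat U) * mat U = 1 := U.1.2.1

theorem mat_mul_star_mat (U : SU2) : mat U * star (mat U) = 1 := U.1.2.2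

theorem det_mat_s7 (U : SU2) : (mat U).det = 1 := U.2

theorem isUnit_mat (U : SU2) : IsUnit (mat U) :=
  (isUnit_iff_isUnit_det _).2 (by rw [det_mat_s7]; exact isUnit_one)

theorem mem_unitaryGroup_of_normSq_add_normSq_eq_one {a b : ℂ}
    (h : normSq a + normSq b = 1) : !![a, -conj b; b, conj a] ∈ unitaryGroup (Fin 2) ℂ := by
  rw [normSq_add_normSq_eq_one_iff] at h
  rw [mem_unitaryGroup_iff', star_fin_two_of, mul_fin_two, one_fin_two, of_fin_two_eq_iff]
  simp only [RCLike.star_def, map_neg, conj_conj]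
  exact ⟨by linear_combination h, by ring, by ring, by linear_combination h⟩

def mk (a b : ℂ) (h : normSq a + normSq b = 1) : SU2 :=
  ⟨⟨!![a, -conj b; b, conj a], mem_unitaryGroup_of_normSq_add_normSq_eq_one h⟩, by
    show det !![a, -conj b; b, conj a] = 1
    rw [det_fin_two_of]
    linear_combination normSq_add_normSq_eq_one_iff.1 h⟩

theorem mat_mk (a b : ℂ) (h : normSq a + normSq b = 1) :
    mat (mk a b h) = !![a, -conj b; b, conj a] := rfl

theorem star_mat_eq_adjugate (U : SU2) : star (mat U) = adjugate (mat U) :=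
  calc star (mat U) = star (mat U) * (mat U * adjugate (mat U)) := by
        rw [mul_adjugate, det_mat_s7, one_smul, mul_one]
    _ = adjugate (mat U) := by rw [← mul_assoc, star_mat_mul_mat, one_mul]

theorem exists_eq_mk (U : SU2) : ∃ a b h, U = mk a b h := by
  have hadj := star_mat_eq_adjugate U
  have hnorm := star_mat_mul_mat U
  rw [eta_fin_two (mat U), star_fin_two_of, adjugate_fin_two_of] at hadj
  rw [eta_fin_two (mat U), star_fin_two_of, mul_fin_two, one_fin_two] at hnorm
  obtain ⟨h11, h01, -, -⟩ := of_fin_two_eq_iff.1 hadj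
  obtain ⟨hnorm, -, -, -⟩ := of_fin_two_eq_iff.1 hnorm
  refine ⟨mat U 0 0, mat U 1 0, normSq_add_normSq_eq_one_iff.2 hnorm, ext ?_⟩
  rw [mat_mk, eta_fin_two (mat U)]
  exact of_fin_two_eq_iff.2 ⟨rfl, neg_eq_iff_eq_neg.1 h01.symm, rfl, h11.symm⟩

theorem mat_conj_eq_of_mul_eq {U X : SU2} {D : Matrix (Fin 2) (Fin 2) ℂ}
    (h : mat U * mat X = D * mat U) : mat (U * X * U⁻¹) = D := by
  rw [mat_mul, mat_mul, h, mat_inv, mul_assoc, mat_mul_star_mat, mul_one]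

def Anticommute (A B : SU2) : Prop := mat A * mat B = -(mat B * mat A)

theorem anticommute_of_commutator_eq_neg_one {A B : SU2}
    (h : mat (A * B * A⁻¹ * B⁻¹) = -1) : Anticommute A B := by
  rw [Anticommute, ← mat_mul, ← mat_mul, ← neg_one_mul, ← h, ← mat_mul]
  congr 1
  group

theorem Anticommute.conj {A B : SU2} (h : Anticommute A B) (U : SU2) :
    Anticommute (U * A * U⁻¹) (U * B * U⁻¹) := by
  have hconj : ∀ X Y : SU2, U * X * U⁻¹ * (U * Y * U⁻¹) = U * (X * Y) * U⁻¹ := fun _ _ => by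
    group
  rw [Anticommute, ← mat_mul, ← mat_mul, hconj, hconj]
  simp only [mat_mul]
  rw [(h : mat A * mat B = _), mul_neg, neg_mul]

theorem exists_conj_eq_i_of_trace_eq_zero (A : SU2) (hA : (mat A).trace = 0) :
    ∃ U : SU2, mat (U * A * U⁻¹) = !![I, 0; 0, -I] := by
  obtain ⟨a, b, hab, hv⟩ := exists_normSq_add_normSq_eq_one_mulVec_eq_smul (mat A) (t := I)
    (by rw [hA, det_mat_s7, I_sq]; ring)
  obtain ⟨c, d, hcd, rfl⟩ := exists_eq_mk A
  have htr : c + conj c = 0 := by simpa [mat_mk, trace_fin_two] using hA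
  have hv0 : c * a - conj d * b = I * a := by
    simpa [mat_mk, mulVec, dotProduct, Fin.sum_univ_two, sub_eq_add_neg] using congrFun hv 0
  have hv1 : d * a + conj c * b = I * b := by
    simpa [mat_mk, mulVec, dotProduct, Fin.sum_univ_two] using congrFun hv 1
  have hv0' := congrArg conj hv0
  have hv1' := congrArg conj hv1
  simp only [map_add, map_sub, map_mul, conj_conj, conj_I] at hv0' hv1'
  refine ⟨(mk a b hab)⁻¹, mat_conj_eq_of_mul_eq ?_⟩
  rw [mat_inv, mat_mk, mat_mk, star_fin_two_of, mul_fin_two, mul_fin_two, of_fin_two_eq_iff]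
  simp only [RCLike.star_def, map_neg, conj_conj]
  refine ⟨?_, ?_, ?_, ?_⟩
  · linear_combination conj a * htr - hv0'
  · linear_combination conj b * htr - hv1'
  · linear_combination hv1 - b * htr
  · linear_combination a * htr - hv0

theorem exists_conj_eq_ij_of_mat_eq_i {A B : SU2} (hA : mat A = !![I, 0; 0, -I])
    (hAB : Anticommute A B) :
    ∃ U : SU2, mat (U * A * U⁻¹) = !![I, 0; 0, -I] ∧ mat (U * B * U⁻¹) = !![0, 1; -1, 0] := by
  obtain ⟨c, d, hcd, rfl⟩ := exists_eq_mk B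
  rw [Anticommute, hA, mat_mk, mul_fin_two, mul_fin_two] at hAB
  simp only [neg_of, neg_cons, neg_empty, of_fin_two_eq_iff] at hAB
  obtain rfl : c = 0 := by
    have h2c : (2 * I) * c = 0 := by linear_combination hAB.1
    exact (mul_eq_zero.1 h2c).resolve_left (by simp)
  have hd : normSq d = 1 := by simpa using hcd
  obtain ⟨l, hl⟩ : ∃ l : ℂ, l ^ 2 = -d := IsAlgClosed.exists_pow_nat_eq _ two_pos
  have hl1 : normSq l = 1 := (pow_eq_one_iff_of_nonneg (normSq_nonneg l) two_ne_zero).1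
    (by rw [← map_pow, hl, normSq_neg, hd])
  have hl1' : conj l * l = 1 := by rw [← normSq_eq_conj_mul_self, hl1, ofReal_one]
  have hlc : conj l ^ 2 = -conj d := by rw [← map_pow, hl, map_neg]
  refine ⟨mk l 0 (by simpa using hl1), mat_conj_eq_of_mul_eq ?_, mat_conj_eq_of_mul_eq ?_⟩
  · rw [hA, mat_mk, map_zero, neg_zero, mul_fin_two, mul_fin_two, of_fin_two_eq_iff]
    exact ⟨by ring, by ring, by ring, by ring⟩
  · rw [mat_mk, mat_mk, map_zero, neg_zero, mul_fin_two, mul_fin_two, of_fin_two_eq_iff]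
    refine ⟨by ring, ?_, ?_, by ring⟩
    · linear_combination -l * hlc + conj l * hl1'
    · linear_combination conj l * hl - l * hl1'

end SU2

/-- If `A, B ∈ SU(2)` satisfy `A B A⁻¹ B⁻¹ = -I`, then the pair `(A, B)` is simultaneously
conjugate in `SU(2)` to the quaternionic pair `(i, j)`, i.e. to
`(diag(i, -i), [[0,1],[-1,0]])`. -/
theorem commutator_neg_one_conjugate_to_ij (A B : SU2)
    (h : SU2.mat (A * B * A⁻¹ * B⁻¹) = -1) :
    ∃ U : SU2,
      SU2.mat (U * A * U⁻¹) = !![Complex.I, 0; 0, -Complex.I] ∧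
      SU2.mat (U * B * U⁻¹) = !![0, 1; -1, 0] := by
  have hAB := SU2.anticommute_of_commutator_eq_neg_one h
  obtain ⟨V, hV⟩ := SU2.exists_conj_eq_i_of_trace_eq_zero A
    (trace_eq_zero_of_mul_eq_neg_mul (SU2.isUnit_mat B) hAB)
  obtain ⟨W, hWA, hWB⟩ := SU2.exists_conj_eq_ij_of_mat_eq_i hV (hAB.conj V)
  have hconj : ∀ X : SU2, W * V * X * (W * V)⁻¹ = W * (V * X * V⁻¹) * W⁻¹ := fun _ => by group
  exact ⟨W * V, by rwa [hconj], by rwa [hconj]⟩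
end
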